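/- For any integers n, t, p ≥ 1, any subset S ⊆ [n], and any sequence 𝐛 ∈ (ℤ/pℤ)^n, one has |{(𝐢,𝐱) : 𝐢 ∈ S^t, 𝐱 ∈ (ℤ/pℤ)^t, ms(𝐢,𝐱) = 𝐛}| = Σ_{T : supp(𝐛) ⊆ T ⊆ S, |T| ≤ t} p^{t−|T|} · |{𝐢 ∈ T^t : range(𝐢) = T}| (the restriction |T| ≤ t is harmless since there is no 𝐢 ∈ T^t with range(𝐢) = T when |T| > t). -/

import Mathlib

/-- The modular signature of a pair of sequences `i ∈ [n]^t`, `x ∈ (ℤ/pℤ)^t`: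
its `q`-th coordinate is `∑_{r : i r = q} x r (mod p)`. -/
def ms {n t p : ℕ} (i : Fin t → Fin n) (x : Fin t → ZMod p) : Fin n → ZMod p :=
  fun q => ∑ r ∈ Finset.univ.filter (fun r => i r = q), x r

/-- The support of `b ∈ (ℤ/pℤ)^n`: the set of coordinates with nonzero entry. -/
def msupp {n p : ℕ} (b : Fin n → ZMod p) : Finset (Fin n) :=
  Finset.univ.filter (fun q => b q ≠ 0)

/-! For fixed `i`, the map `x ↦ ms i x` is a group homomorphism `(ℤ/pℤ)^t → (ℤ/pℤ)^n` whose image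
is exactly the group of vectors supported in `range i`, of order `p ^ |range i|`. Hence each of its
nonempty fibres has `p ^ (t - |range i|)` elements, and summing over `i ∈ S^t`, grouped by
`T = range i`, gives the formula. -/

open Finset

theorem Finset.card_filter_prod_eq_sum {α β : Type*} [Fintype α] [Fintype β] (P : α → Prop)
    (Q : α → β → Prop) [DecidablePred P] [∀ a, DecidablePred (Q a)] :
    #{ab : α × β | P ab.1 ∧ Q ab.1 ab.2} = ∑ a with P a, #{b | Q a b} := by
  simp only [card_filter, Fintype.sum_prod_type, sum_filter, ite_and]
  exact sum_congr rfl fun a _ => by split_ifs <;> simp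

theorem Finset.univ_image_subset_iff {α β : Type*} [Fintype α] [DecidableEq β] {f : α → β}
    {T : Finset β} : univ.image f ⊆ T ↔ ∀ a, f a ∈ T := by
  simp [image_subset_iff]

theorem AddMonoidHom.card_fiber_mul_card_range {G H : Type*} [AddGroup G] [Fintype G]
    [AddMonoid H] [DecidableEq H] (f : G →+ H) {y : H} (hy : y ∈ Set.range f) {s : Finset H}
    (hs : (s : Set H) = Set.range f) : #{g | f g = y} * #s = Fintype.card G :=
  calc #{g | f g = y} * #s = ∑ z ∈ s, #{g | f g = z} := by
        rw [sum_congr rfl fun z hz => card_fiber_eq_of_mem_range f (hs ▸ mem_coe.2 hz) hy,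
          sum_const, smul_eq_mul, mul_comm]
    _ = Fintype.card G := (card_eq_sum_card_fiberwise fun g _ => hs ▸ ⟨g, rfl⟩).symm

section
variable {n t p : ℕ}

def msHom (i : Fin t → Fin n) : (Fin t → ZMod p) →+ (Fin n → ZMod p) where
  toFun := ms i
  map_zero' := by ext; simp [ms]
  map_add' x y := by ext; simp [ms, sum_add_distrib]

lemma ms_single (i : Fin t → Fin n) (r : Fin t) (c : ZMod p) :
    ms i (Pi.single r c) = Pi.single (i r) c := by
  ext q
  simp [ms, Pi.single_apply, eq_comm]

lemma msupp_subset_iff {b : Fin n → ZMod p} {T : Finset (Fin n)} :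
    msupp b ⊆ T ↔ ∀ q ∉ T, b q = 0 := by
  simp only [msupp, subset_iff, mem_filter, mem_univ, true_and]
  exact forall_congr' fun q => not_imp_comm

lemma ms_apply_eq_zero_of_notMem (i : Fin t → Fin n) (x : Fin t → ZMod p) {q : Fin n}
    (hq : q ∉ univ.image i) : ms i x q = 0 := by
  refine sum_eq_zero fun r hr => absurd ?_ hq
  simp_all

lemma mem_range_ms_iff (i : Fin t → Fin n) (b : Fin n → ZMod p) :
    b ∈ Set.range (ms i) ↔ msupp b ⊆ univ.image i := by
  refine ⟨?_, fun hb => ?_⟩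
  · rintro ⟨x, rfl⟩
    exact msupp_subset_iff.2 fun q hq => ms_apply_eq_zero_of_notMem i x hq
  · change b ∈ (msHom i).range
    rw [← Finset.univ_sum_single b]
    refine AddSubgroup.sum_mem _ fun q _ => ?_
    by_cases hq : q ∈ univ.image i
    · obtain ⟨r, -, rfl⟩ := mem_image.1 hq
      exact ⟨Pi.single r (b (i r)), ms_single i r _⟩
    · rw [msupp_subset_iff.1 hb q hq, Pi.single_zero]
      exact zero_mem _

lemma card_filter_msupp_subset [NeZero p] (T : Finset (Fin n)) :
    #{b : Fin n → ZMod p | msupp b ⊆ T} = p ^ #T := by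
  have hpi : ({b | msupp b ⊆ T} : Finset (Fin n → ZMod p))
      = Fintype.piFinset fun q => if q ∈ T then univ else {0} := by
    ext b
    simp only [mem_filter, mem_univ, true_and, msupp_subset_iff, Fintype.mem_piFinset]
    refine forall_congr' fun q => ?_
    split_ifs <;> simp_all
  rw [hpi, Fintype.card_piFinset]
  simp [apply_ite card, prod_ite_mem]

lemma card_ms_fiber [NeZero p] (i : Fin t → Fin n) (b : Fin n → ZMod p) :
    #{x | ms i x = b} = if msupp b ⊆ univ.image i then p ^ (t - #(univ.image i)) else 0 := by
  split_ifs with hb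
  · have hcard := (msHom (p := p) i).card_fiber_mul_card_range ((mem_range_ms_iff i b).2 hb)
      (s := {b' | msupp b' ⊆ univ.image i}) (by ext; simp [← mem_range_ms_iff]; rfl)
    have hsplit : p ^ t = p ^ (t - #(univ.image i)) * p ^ #(univ.image i) := by
      rw [← pow_add, Nat.sub_add_cancel (card_image_le.trans_eq (card_fin t))]
    rw [card_filter_msupp_subset, Fintype.card_fun, ZMod.card, Fintype.card_fin, hsplit] at hcard
    exact Nat.eq_of_mul_eq_mul_right (pow_pos (NeZero.pos p) _) hcard
  · exact card_eq_zero.2 <| filter_eq_empty_iff.2 fun x _ hx =>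
      hb ((mem_range_ms_iff i b).1 ⟨x, hx⟩)

end

theorem count_ms_subsets_general (n t p : ℕ) [NeZero p]
    (S : Finset (Fin n)) (b : Fin n → ZMod p) :
    (Finset.univ.filter (fun ix : (Fin t → Fin n) × (Fin t → ZMod p) =>
        (∀ r, ix.1 r ∈ S) ∧ ms ix.1 ix.2 = b)).card
    = ∑ T ∈ S.powerset.filter (fun T => msupp b ⊆ T ∧ T.card ≤ t),
        p ^ (t - T.card) *
          (Finset.univ.filter (fun i : Fin t → Fin n =>
            (∀ r, i r ∈ T) ∧ Finset.image i Finset.univ = T)).card := by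
  calc _ = ∑ i : Fin t → Fin n with ∀ r, i r ∈ S, #{x | ms i x = b} :=
        card_filter_prod_eq_sum _ _
    _ = ∑ i : Fin t → Fin n with (∀ r, i r ∈ S) ∧ msupp b ⊆ univ.image i,
          p ^ (t - #(univ.image i)) := by
        simp only [card_ms_fiber, ← sum_filter, filter_filter]
    _ = _ := by
        rw [← sum_fiberwise_of_maps_to' (g := fun i => univ.image i)
          (f := fun T => p ^ (t - #T)) ?maps]
        · refine sum_congr rfl fun T hT => ?_
          rw [sum_const, smul_eq_mul, mul_comm]
          congr 2
          ext i
          simp only [mem_filter, mem_powerset] at hT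
          simp only [mem_filter, mem_univ, true_and, ← univ_image_subset_iff]
          constructor
          · rintro ⟨-, rfl⟩; exact ⟨subset_rfl, rfl⟩
          · rintro ⟨-, rfl⟩; exact ⟨⟨hT.1, hT.2.1⟩, rfl⟩
        case maps =>
          intro i hi
          simp only [mem_filter, mem_univ, true_and] at hi
          simp only [mem_filter, mem_powerset, univ_image_subset_iff]
          exact ⟨hi.1, hi.2, card_image_le.trans_eq (card_fin t)⟩

/-- `|{(𝐢,𝐱) : 𝐢 ∈ S^t, ms(𝐢,𝐱) = 𝐛}|
  = ∑_{supp(𝐛) ⊆ T ⊆ S, |T| ≤ t} p^{t−|T|} · |{𝐢 ∈ T^t : range(𝐢) = T}|`. -/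
theorem count_ms_subsets (n t p : ℕ) [NeZero p] (hn : 1 ≤ n) (ht : 1 ≤ t) (hp : 1 ≤ p)
    (S : Finset (Fin n)) (b : Fin n → ZMod p) :
    (Finset.univ.filter (fun ix : (Fin t → Fin n) × (Fin t → ZMod p) =>
        (∀ r, ix.1 r ∈ S) ∧ ms ix.1 ix.2 = b)).card
    = ∑ T ∈ S.powerset.filter (fun T => msupp b ⊆ T ∧ T.card ≤ t),
        p ^ (t - T.card) *
          (Finset.univ.filter (fun i : Fin t → Fin n =>
            (∀ r, i r ∈ T) ∧ Finset.image i Finset.univ = T)).card :=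
  count_ms_subsets_general n t p S b
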